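/- Suppose Θ* ≻ 0 satisfies Θ*(i,i) ≤ h for all i and |Θ*(i,j)| ≥ α > 0 for all (i,j) with Θ*(i,j) ≠ 0. If Θ ≻ 0 misses at least one edge of Θ*, i.e., there is a pair (i,j), i ≠ j, with Θ*(i,j) ≠ 0 and Θ(i,j) = 0, then KL(N(0,Θ*⁻¹) || N(0,Θ⁻¹)) ≥ (1/2) log(1/(1 − α²/h²)). -/

import Mathlib

/-!
For every positive definite `A`, `log det (A Θ) ≤ tr (A Θ) - p`: apply `log t ≤ t - 1` to the
eigenvalues of `√Θ A √Θ`. Take `A = Θ*⁻¹ + λ (eᵢeⱼᵀ + eⱼeᵢᵀ)` with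
`λ = Θ*ᵢⱼ / (Θ*ᵢᵢ Θ*ⱼⱼ - Θ*ᵢⱼ²)`. As `Θᵢⱼ = 0`, the perturbation leaves `tr (A Θ) = tr (Θ Θ*⁻¹)`
unchanged, so twice the KL divergence is at least `log det (Θ* A)`, which by the
Weinstein–Aronszajn identity equals `log (Θ*ᵢᵢ Θ*ⱼⱼ / (Θ*ᵢᵢ Θ*ⱼⱼ - Θ*ᵢⱼ²))`. `A` stays positive
definite because the quadratic form of `Θ*⁻¹` dominates that of the inverse of the `2 × 2`
principal block of `Θ*` at `{i, j}`. Finally `Θ*ᵢⱼ² / (Θ*ᵢᵢ Θ*ⱼⱼ) ≥ α² / h²` on the class.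
-/

open Matrix

namespace Matrix

theorem PosDef.mul_sub_sq_pos {n : Type*} {M : Matrix n n ℝ} (hM : M.PosDef) {i j : n}
    (hij : i ≠ j) : 0 < M i i * M j j - M i j ^ 2 := by
  have hinj : Function.Injective ![i, j] := by
    intro a b; fin_cases a <;> fin_cases b <;> simp [hij, hij.symm]
  have := (hM.submatrix hinj).det_pos
  rw [det_fin_two] at this
  have hsymm : M j i = M i j := by simpa using hM.isHermitian.apply i j
  simpa [hsymm, sq] using this

variable {n : Type*} [Fintype n] [DecidableEq n]

theorem PosDef.log_det_le_trace_sub_card {A : Matrix n n ℝ} (hA : A.PosDef) :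
    Real.log A.det ≤ A.trace - Fintype.card n := by
  rw [hA.isHermitian.det_eq_prod_eigenvalues, hA.isHermitian.trace_eq_sum_eigenvalues]
  simp only [RCLike.ofReal_real_eq_id, id_eq]
  rw [Real.log_prod fun k _ => (hA.eigenvalues_pos k).ne', Fintype.card_eq_sum_ones,
    Nat.cast_sum, Nat.cast_one, ← Finset.sum_sub_distrib]
  exact Finset.sum_le_sum fun k _ => Real.log_le_sub_one_of_pos (hA.eigenvalues_pos k)

open scoped MatrixOrder in
theorem PosDef.log_det_mul_le_trace_mul_sub_card {A B : Matrix n n ℝ} (hA : A.PosDef)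
    (hB : B.PosDef) : Real.log (A.det * B.det) ≤ (A * B).trace - Fintype.card n := by
  set S := CFC.sqrt B
  have hSS : S * S = B := CFC.sqrt_mul_sqrt_self B hB.posSemidef.nonneg
  have hS : Sᴴ = S := (CFC.sqrt_nonneg B).posSemidef.isHermitian
  have hSunit : IsUnit S := (CFC.isUnit_sqrt_iff B hB.posSemidef.nonneg).mpr hB.isUnit
  have hSAS : (S * A * S).PosDef := by
    simpa only [hS] using hA.conjTranspose_mul_mul_same (mulVec_injective_of_isUnit hSunit)
  calc Real.log (A.det * B.det) = Real.log (S * A * S).det := by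
        rw [← hSS, det_mul, det_mul, det_mul]; ring_nf
    _ ≤ (S * A * S).trace - Fintype.card n := hSAS.log_det_le_trace_sub_card
    _ = (A * B).trace - Fintype.card n := by rw [trace_mul_cycle, hSS, trace_mul_comm]

theorem PosDef.two_mul_dotProduct_sub_le_dotProduct_inv_mulVec {M : Matrix n n ℝ}
    (hM : M.PosDef) (x w : n → ℝ) :
    2 * (w ⬝ᵥ x) - w ⬝ᵥ (M *ᵥ w) ≤ x ⬝ᵥ (M⁻¹ *ᵥ x) := by
  have hnonneg := hM.inv.posSemidef.dotProduct_mulVec_nonneg (x - M *ᵥ w)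
  have hinv : M⁻¹ *ᵥ (M *ᵥ w) = w := by
    rw [mulVec_mulVec, nonsing_inv_mul _ ((isUnit_iff_isUnit_det M).mp hM.isUnit), one_mulVec]
  have hsymm : (M *ᵥ w) ⬝ᵥ (M⁻¹ *ᵥ x) = w ⬝ᵥ x := by
    rw [dotProduct_mulVec, ← mulVec_transpose, ← conjTranspose_eq_transpose_of_trivial,
      hM.inv.isHermitian.eq, hinv]
  rw [star_trivial, mulVec_sub, hinv, sub_dotProduct, dotProduct_sub, dotProduct_sub, hsymm,
    dotProduct_comm x w, dotProduct_comm (M *ᵥ w) w] at hnonneg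
  linarith

theorem dotProduct_mulVec_single_add_single (i j : n) (c : ℝ) (x : n → ℝ) :
    x ⬝ᵥ ((single i j c + single j i c) *ᵥ x) = 2 * c * (x i * x j) := by
  simp [add_mulVec, single_mulVec_eq]
  ring

theorem single_add_single_dotProduct_mulVec (M : Matrix n n ℝ) (i j : n) (a b : ℝ) :
    (Pi.single i a + Pi.single j b) ⬝ᵥ (M *ᵥ (Pi.single i a + Pi.single j b)) =
      a ^ 2 * M i i + a * b * (M i j + M j i) + b ^ 2 * M j j := by
  simp [mulVec_add, dotProduct_add, add_dotProduct, mulVec_single]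
  ring

theorem trace_single_add_single_mul (M : Matrix n n ℝ) (i j : n) (c : ℝ) :
    ((single i j c + single j i c) * M).trace = c * (M i j + M j i) := by
  rw [add_mul, trace_add, trace_single_mul, trace_single_mul, smul_eq_mul, smul_eq_mul]
  ring

theorem det_one_add_mul_single_add_single {R : Type*} [CommRing R] (M : Matrix n n R)
    (i j : n) (c : R) : (1 + M * (single i j c + single j i c)).det =
      (1 + c * M i j) * (1 + c * M j i) - c ^ 2 * M i i * M j j := by
  have hUV : M * (single i j c + single j i c) =
      (c • M.submatrix id ![i, j]) * (1 : Matrix n n R).submatrix ![j, i] id := by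
    ext k l
    simp only [mul_apply, Fin.sum_univ_two, submatrix_apply, smul_apply, id, one_apply,
      add_apply, single_apply, ite_and, mul_add, mul_ite, mul_zero, Finset.sum_add_distrib,
      Finset.sum_ite_eq, Finset.mem_univ, if_true, cons_val_zero, cons_val_one, cons_val_fin_one,
      smul_eq_mul, mul_one]
    split_ifs <;> simp_all [mul_comm]
  have hVU : (1 : Matrix n n R).submatrix ![j, i] id * (c • M.submatrix id ![i, j]) =
      c • M.submatrix ![j, i] ![i, j] := by
    ext a b
    simp only [mul_apply, submatrix_apply, smul_apply, id, one_apply]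
    simp
  rw [hUV, det_one_add_mul_comm, hVU, det_fin_two]
  simp only [add_apply, smul_apply, submatrix_apply, one_apply_eq, cons_val_zero, cons_val_one,
    cons_val_fin_one, smul_eq_mul, one_apply_ne zero_ne_one, one_apply_ne one_ne_zero, zero_add]
  ring

-- The left side is the quadratic form of the inverse `2 × 2` block, attained by the `w` below.
theorem PosDef.div_le_dotProduct_inv_mulVec {M : Matrix n n ℝ} (hM : M.PosDef) {i j : n}
    (hij : i ≠ j) (x : n → ℝ) :
    (M j j * x i ^ 2 - 2 * M i j * x i * x j + M i i * x j ^ 2) / (M i i * M j j - M i j ^ 2) ≤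
      x ⬝ᵥ (M⁻¹ *ᵥ x) := by
  set D := M i i * M j j - M i j ^ 2
  have hD : 0 < D := hM.mul_sub_sq_pos hij
  have hsymm : M j i = M i j := by simpa using hM.isHermitian.apply i j
  set a := (M j j * x i - M i j * x j) / D
  set b := (M i i * x j - M i j * x i) / D
  have hw := hM.two_mul_dotProduct_sub_le_dotProduct_inv_mulVec x (Pi.single i a + Pi.single j b)
  rw [single_add_single_dotProduct_mulVec, add_dotProduct, single_dotProduct, single_dotProduct,
    hsymm] at hw
  convert hw using 1
  simp only [a, b]
  field_simp
  ring

theorem PosDef.inv_add_single_add_single {M : Matrix n n ℝ} (hM : M.PosDef) {i j : n}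
    (hij : i ≠ j) :
    (M⁻¹ + (single i j (M i j / (M i i * M j j - M i j ^ 2)) +
      single j i (M i j / (M i i * M j j - M i j ^ 2)))).PosDef := by
  set D := M i i * M j j - M i j ^ 2
  have hD : 0 < D := hM.mul_sub_sq_pos hij
  refine .of_dotProduct_mulVec_pos (hM.inv.isHermitian.add ?_) fun x hx => ?_
  · simp [IsHermitian, add_comm]
  rw [star_trivial, add_mulVec, dotProduct_add, dotProduct_mulVec_single_add_single]
  by_cases hxij : x i = 0 ∧ x j = 0
  · simpa [hxij.1, hxij.2] using hM.inv.dotProduct_mulVec_pos hx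
  have hnum : 0 < M j j * x i ^ 2 + M i i * x j ^ 2 := by
    rcases not_and_or.mp hxij with hx | hx
    · nlinarith [hM.diag_pos (i := i), hM.diag_pos (i := j), sq_pos_of_ne_zero hx,
        sq_nonneg (x j)]
    · nlinarith [hM.diag_pos (i := i), hM.diag_pos (i := j), sq_pos_of_ne_zero hx,
        sq_nonneg (x i)]
  have hbound := hM.div_le_dotProduct_inv_mulVec hij x
  have hsplit : (M j j * x i ^ 2 + M i i * x j ^ 2) / D =
      (M j j * x i ^ 2 - 2 * M i j * x i * x j + M i i * x j ^ 2) / D +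
        2 * (M i j / D) * (x i * x j) := by
    field_simp
    ring
  linarith [div_pos hnum hD]

theorem PosDef.log_mul_div_sub_sq_le_trace_mul_inv_add_log_det_div {Θstar Θ : Matrix n n ℝ}
    (hstar : Θstar.PosDef) (hΘ : Θ.PosDef) {i j : n} (hij : i ≠ j) (hzero : Θ i j = 0) :
    Real.log (Θstar i i * Θstar j j / (Θstar i i * Θstar j j - Θstar i j ^ 2)) ≤
      (Θ * Θstar⁻¹).trace - Fintype.card n + Real.log (Θstar.det / Θ.det) := by
  set c := Θstar i j / (Θstar i i * Θstar j j - Θstar i j ^ 2)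
  set A := Θstar⁻¹ + (single i j c + single j i c)
  have hA : A.PosDef := hstar.inv_add_single_add_single hij
  have hzero' : Θ j i = 0 := by simpa [hzero] using hΘ.isHermitian.apply i j
  have htrace : (A * Θ).trace = (Θ * Θstar⁻¹).trace := by
    rw [add_mul, trace_add, trace_single_add_single_mul, hzero, hzero', trace_mul_comm]; simp
  have hdet : Θstar.det * A.det =
      Θstar i i * Θstar j j / (Θstar i i * Θstar j j - Θstar i j ^ 2) := by
    rw [← det_mul, mul_add, mul_nonsing_inv _ hstar.det_pos.ne'.isUnit,
      det_one_add_mul_single_add_single]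
    have hD := (hstar.mul_sub_sq_pos hij).ne'
    have hsymm : Θstar j i = Θstar i j := by simpa using hstar.isHermitian.apply i j
    rw [hsymm]
    simp only [c]
    field_simp
    ring
  have hlog := hA.log_det_mul_le_trace_mul_sub_card hΘ
  rw [Real.log_mul hA.det_pos.ne' hΘ.det_pos.ne', htrace] at hlog
  rw [← hdet, Real.log_mul hstar.det_pos.ne' hA.det_pos.ne',
    Real.log_div hstar.det_pos.ne' hΘ.det_pos.ne']
  linarith

end Matrix

theorem Real.log_one_div_one_sub_sq_div_sq_le {α h a b c : ℝ} (hα : 0 ≤ α) (hb : α ≤ |b|)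
    (ha : 0 < a) (hc : 0 < c) (hah : a ≤ h) (hch : c ≤ h) (habc : b ^ 2 < a * c) :
    Real.log (1 / (1 - α ^ 2 / h ^ 2)) ≤ Real.log (a * c / (a * c - b ^ 2)) := by
  have hac : 0 < a * c := mul_pos ha hc
  have hratio : α ^ 2 / h ^ 2 ≤ b ^ 2 / (a * c) :=
    div_le_div₀ (sq_nonneg b) (by simpa using pow_le_pow_left₀ hα hb 2) hac (by nlinarith)
  have hpos : 0 < 1 - b ^ 2 / (a * c) := by rw [sub_pos, div_lt_one hac]; exact habc
  calc Real.log (1 / (1 - α ^ 2 / h ^ 2)) ≤ Real.log (1 / (1 - b ^ 2 / (a * c))) :=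
        Real.log_le_log (one_div_pos.mpr (by linarith))
          (one_div_le_one_div_of_le hpos (by linarith))
    _ = Real.log (a * c / (a * c - b ^ 2)) := by
        congr 1; field_simp

/-- If `Θ* ∈ Ω∞(α,h)` (diagonal entries at most `h`, nonzero entries of magnitude at
least `α > 0`) and `Θ ≻ 0` misses at least one edge of `Θ*`, then
`KL(N(0,Θ*⁻¹) ‖ N(0,Θ⁻¹)) ≥ ½ log(1/(1 − α²/h²))`. -/
theorem stmt6 {p : ℕ} (α h : ℝ) (hα : 0 < α)
    (Θstar Θ : Matrix (Fin p) (Fin p) ℝ)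
    (hstar : Θstar.PosDef) (hΘ : Θ.PosDef)
    (hdiag : ∀ i, Θstar i i ≤ h)
    (hmin : ∀ i j, Θstar i j ≠ 0 → α ≤ |Θstar i j|)
    (i j : Fin p) (hij : i ≠ j) (hne : Θstar i j ≠ 0) (hzero : Θ i j = 0) :
    (1 / 2) * ((Θ * Θstar⁻¹).trace - (p : ℝ) + Real.log (Θstar.det / Θ.det)) ≥
      (1 / 2) * Real.log (1 / (1 - α ^ 2 / h ^ 2)) := by
  have hkl := hstar.log_mul_div_sub_sq_le_trace_mul_inv_add_log_det_div hΘ hij hzero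
  have hbound := Real.log_one_div_one_sub_sq_div_sq_le hα.le (hmin i j hne) hstar.diag_pos
    hstar.diag_pos (hdiag i) (hdiag j) (by linarith [hstar.mul_sub_sq_pos hij])
  rw [Fintype.card_fin] at hkl
  linarith
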